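/- arXiv:1712.00381 — 5 statements merged into one kernel-verified Lean document; each statement's English description precedes it below -/
import Mathlib

section
/- Let G = (S, E) be a complete labeled graph on labels {1,…,M} with S finite nonempty, let A_1,…,A_M be maps on ℝⁿ, and let (V_s)_{s∈S} be functions ℝⁿ → ℝ satisfying V_d(A_σ x) ≤ V_s(x) for all x and all edges (s,d,σ) ∈ E. Then V̄(x) := min_{s∈S} V_s(x) satisfies V̄(A_σ x) ≤ V̄(x) for all x ∈ ℝⁿ and all σ ∈ {1,…,M}, i.e. V̄ is a common Lyapunov function. -/
theorem stmt6 {n M : ℕ} {S : Type*} [Fintype S] [Nonempty S]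
    (E : S → S → Fin M → Prop)
    (hcomplete : ∀ (s : S) (σ : Fin M), ∃ d : S, E s d σ)
    (A : Fin M → (Fin n → ℝ) → (Fin n → ℝ))
    (V : S → (Fin n → ℝ) → ℝ)
    (hV : ∀ (s d : S) (σ : Fin M), E s d σ → ∀ x, V d (A σ x) ≤ V s x) :
    ∀ (σ : Fin M) (x : Fin n → ℝ),
      Finset.univ.inf' Finset.univ_nonempty (fun s => V s (A σ x)) ≤
        Finset.univ.inf' Finset.univ_nonempty (fun s => V s x) := by
  intro σ x
  apply Finset.le_inf'
  intro s _
  obtain ⟨d, hd⟩ := hcomplete s σ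
  exact le_trans (Finset.inf'_le _ (Finset.mem_univ d)) (hV s d σ hd x)
end

section
/- Let G = (S, E) be a co-complete labeled graph on labels {1,…,M} with S finite nonempty, let A_1,…,A_M be maps on ℝⁿ, and let (V_s)_{s∈S} be functions ℝⁿ → ℝ satisfying V_d(A_σ x) ≤ V_s(x) for all x and all edges (s,d,σ) ∈ E. Then V̄(x) := max_{s∈S} V_s(x) satisfies V̄(A_σ x) ≤ V̄(x) for all x ∈ ℝⁿ and all σ ∈ {1,…,M}. -/
theorem stmt7 {n M : ℕ} {S : Type*} [Fintype S] [Nonempty S]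
    (E : S → S → Fin M → Prop)
    (hcocomplete : ∀ (d : S) (σ : Fin M), ∃ s : S, E s d σ)
    (A : Fin M → (Fin n → ℝ) → (Fin n → ℝ))
    (V : S → (Fin n → ℝ) → ℝ)
    (hV : ∀ (s d : S) (σ : Fin M), E s d σ → ∀ x, V d (A σ x) ≤ V s x) :
    ∀ (σ : Fin M) (x : Fin n → ℝ),
      Finset.univ.sup' Finset.univ_nonempty (fun s => V s (A σ x)) ≤
        Finset.univ.sup' Finset.univ_nonempty (fun s => V s x) := by
  intro σ x
  apply Finset.sup'_le
  intro d _
  obtain ⟨s, hs⟩ := hcocomplete d σ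
  exact le_trans (hV s d σ hs x) (Finset.le_sup' (fun s => V s x) (Finset.mem_univ s))
end

section
/- Let G = (S, E) be a labeled graph on finite node set S and labels {1,…,M}. Define the transition on nonempty subsets of S by δ_σ(P) = { q ∈ S : ∃ p ∈ P, (p,q,σ) ∈ E }. If G is Path-Complete, then for every subset P ⊆ S that is reachable from S by a (possibly empty) sequence of transitions δ_{σ₁},…,δ_{σ_k} producing nonempty sets, and for every label σ, the set δ_σ(P) is nonempty. (Equivalently: the observer graph of a Path-Complete graph is complete.) -/
/-- A labeled graph (edges `E s d σ`) is Path-Complete if every finite word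
over the labels is carried by some path in the graph. -/
def PathComplete {S : Type*} {M : ℕ} (E : S → S → Fin M → Prop) : Prop :=
  ∀ w : List (Fin M), ∃ path : Fin (w.length + 1) → S,
    ∀ i : Fin w.length, E (path i.castSucc) (path i.succ) (w.get i)

/-- The observer transition: image of a set of nodes under the σ-labeled edges. -/
def obsDelta {S : Type*} {M : ℕ} (E : S → S → Fin M → Prop) (σ : Fin M)
    (P : Set S) : Set S :=
  {q : S | ∃ p ∈ P, E p q σ}

lemma stmt8_key {M : ℕ} {S : Type*} (E : S → S → Fin M → Prop) :
    ∀ (w : List (Fin M)) (path : Fin (w.length + 1) → S),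
      (∀ i : Fin w.length, E (path i.castSucc) (path i.succ) (w.get i)) →
      path (Fin.last _) ∈ w.foldl (fun P σ' => obsDelta E σ' P) Set.univ := by
  intro w
  induction w using List.reverseRecOn with
  | nil => intro path _; simp
  | append_singleton w' σ ih =>
    intro path hpath
    have hlen : (w' ++ [σ]).length = w'.length + 1 := by simp
    rw [List.foldl_append]
    simp only [List.foldl_cons, List.foldl_nil]
    set path' : Fin (w'.length + 1) → S :=
      fun i => path (Fin.castLE (by omega) i) with hp'
    have hmem : path' (Fin.last _) ∈
        w'.foldl (fun P σ' => obsDelta E σ' P) Set.univ := by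
      apply ih
      intro i
      have := hpath (Fin.castLE (by omega) i.castSucc)
      have hget : (w' ++ [σ]).get (Fin.castLE (by omega) i.castSucc) = w'.get i := by
        simp [List.get_eq_getElem, List.getElem_append_left]
      rw [hget] at this
      have e1 : path' i.castSucc = path (Fin.castLE (by omega) i.castSucc).castSucc := by
        show path _ = path _
        congr 1
      have e2 : path' i.succ = path (Fin.castLE (by omega) i.castSucc).succ := by
        show path _ = path _
        congr 1
      rw [e1, e2]
      exact this
    refine ⟨path' (Fin.last _), hmem, ?_⟩
    have := hpath ⟨w'.length, by simp⟩
    have hget : (w' ++ [σ]).get ⟨w'.length, by simp⟩ = σ := by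
      simp [List.get_eq_getElem]
    rw [hget] at this
    have e1 : path' (Fin.last _) = path (Fin.castSucc ⟨w'.length, by simp⟩) := by
      show path _ = path _
      congr 1
    have e2 : path (Fin.last _) = path (Fin.succ ⟨w'.length, by simp⟩) := by
      congr 1
      ext
      simp [hlen]
    rw [e1, e2]
    exact this

theorem stmt8 {M : ℕ} {S : Type*} [Fintype S] (E : S → S → Fin M → Prop)
    (hPC : PathComplete E) :
    ∀ (w : List (Fin M)) (σ : Fin M),
      (obsDelta E σ (w.foldl (fun P σ' => obsDelta E σ' P) Set.univ)).Nonempty := by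
  intro w σ
  obtain ⟨path, hpath⟩ := hPC (w ++ [σ])
  have h := stmt8_key E (w ++ [σ]) path hpath
  rw [List.foldl_append] at h
  simp only [List.foldl_cons, List.foldl_nil] at h
  exact ⟨_, h⟩
end

section
/- Suppose V : ℝⁿ → ℝ is continuous, positive definite (V(x) ≥ 0 with equality iff x = 0), positively homogeneous of degree 2, and satisfies V(A_σ x) ≤ γ² V(x) for all x ∈ ℝⁿ and all σ ∈ {1,…,M}, where 0 ≤ γ < 1. Then the switching system x(t+1) = A_{σ(t)} x(t) is asymptotically stable under arbitrary switching: for every switching sequence and every initial condition, x(t) → 0 as t → ∞. -/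
/-!
By compactness of the unit sphere, `V` is bounded below there by some `m > 0`, and
2-homogeneity spreads this to `m * ‖x‖ ^ 2 ≤ V x` everywhere. Along any trajectory `V`
contracts by the factor `γ ^ 2 < 1` at every step whatever the switching, so `V (x t) → 0`,
and with it `‖x t‖ → 0`.
-/

open Filter Topology

section QuadraticLowerBound

variable {E : Type*} [NormedAddCommGroup E] {V : E → ℝ}

lemma eq_sq_norm_mul_of_homogeneous [NormedSpace ℝ E] (hhom : ∀ c : ℝ, 0 ≤ c → ∀ x, V (c • x) = c ^ 2 * V x)
    {y : E} (hy : y ≠ 0) : V y = ‖y‖ ^ 2 * V (‖y‖⁻¹ • y) := by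
  rw [← hhom _ (norm_nonneg y), smul_smul, mul_inv_cancel₀ (norm_ne_zero_iff.mpr hy), one_smul]

lemma exists_pos_mul_sq_norm_le [NormedSpace ℝ E] [ProperSpace E] (hcont : Continuous V)
    (hpos : ∀ x ≠ 0, 0 < V x) (hhom : ∀ c : ℝ, 0 ≤ c → ∀ x, V (c • x) = c ^ 2 * V x) :
    ∃ m > 0, ∀ y, m * ‖y‖ ^ 2 ≤ V y := by
  obtain ⟨m, hm, hmV⟩ := (isCompact_sphere (0 : E) 1).exists_forall_le' hcont.continuousOn
    fun u hu => hpos u (ne_zero_of_mem_unit_sphere ⟨u, hu⟩)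
  refine ⟨m, hm, fun y => ?_⟩
  rcases eq_or_ne y 0 with rfl | hy
  · have hV0 : V 0 = 0 := by simpa using hhom 0 le_rfl 0
    simp [hV0]
  · have hunit : ‖y‖⁻¹ • y ∈ Metric.sphere (0 : E) 1 := by
      rw [mem_sphere_zero_iff_norm, norm_smul, norm_inv, norm_norm,
        inv_mul_cancel₀ (norm_ne_zero_iff.mpr hy)]
    rw [eq_sq_norm_mul_of_homogeneous hhom hy, mul_comm]
    exact mul_le_mul_of_nonneg_left (hmV _ hunit) (by positivity)

lemma tendsto_norm_zero_of_mul_sq_norm_le {m : ℝ} (hm : 0 < m) (hV : ∀ y, m * ‖y‖ ^ 2 ≤ V y)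
    {x : ℕ → E} (hx : Tendsto (fun t => V (x t)) atTop (𝓝 0)) :
    Tendsto (fun t => ‖x t‖) atTop (𝓝 0) := by
  have hsq : Tendsto (fun t => ‖x t‖ ^ 2) atTop (𝓝 0) := by
    refine squeeze_zero (fun t => by positivity) (fun t => (le_div_iff₀' hm).2 (hV (x t))) ?_
    simpa using hx.div_const m
  simpa [Real.sqrt_sq (norm_nonneg _)] using hsq.sqrt

end QuadraticLowerBound

lemma tendsto_zero_of_succ_le_mul {u : ℕ → ℝ} {q : ℝ} (hu : ∀ t, 0 ≤ u t) (hq0 : 0 ≤ q)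
    (hq1 : q < 1) (hstep : ∀ t, u (t + 1) ≤ q * u t) : Tendsto u atTop (𝓝 0) := by
  refine squeeze_zero hu (fun t => le_geom hq0 t fun k _ => hstep k) ?_
  simpa using (tendsto_pow_atTop_nhds_zero_of_lt_one hq0 hq1).mul_const (u 0)

theorem stmt12 {n M : ℕ} (A : Fin M → (Fin n → ℝ) →ₗ[ℝ] (Fin n → ℝ))
    (V : (Fin n → ℝ) → ℝ) (γ : ℝ)
    (hVcont : Continuous V)
    (hVnonneg : ∀ x, 0 ≤ V x)
    (hVdef : ∀ x, V x = 0 ↔ x = 0)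
    (hVhom : ∀ c : ℝ, 0 ≤ c → ∀ x, V (c • x) = c ^ 2 * V x)
    (hγ0 : 0 ≤ γ) (hγ1 : γ < 1)
    (hdec : ∀ (σ : Fin M) (x : Fin n → ℝ), V (A σ x) ≤ γ ^ 2 * V x) :
    ∀ (σ : ℕ → Fin M) (x : ℕ → (Fin n → ℝ)),
      (∀ t : ℕ, x (t + 1) = A (σ t) (x t)) →
      Filter.Tendsto (fun t => ‖x t‖) Filter.atTop (nhds 0) := by
  intro σ x hx
  have hVpos : ∀ y ≠ 0, 0 < V y := fun y hy => (hVnonneg y).lt_of_ne' ((hVdef y).not.mpr hy)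
  obtain ⟨m, hm, hVm⟩ := exists_pos_mul_sq_norm_le hVcont hVpos hVhom
  refine tendsto_norm_zero_of_mul_sq_norm_le hm hVm ?_
  refine tendsto_zero_of_succ_le_mul (fun t => hVnonneg _) (sq_nonneg γ)
    (pow_lt_one₀ hγ0 hγ1 two_ne_zero) fun t => ?_
  rw [hx t]
  exact hdec (σ t) (x t)
end

section
/- Sufficiency direction of the graph-comparison criterion: Let G = (S,E) and G' = (S',E') be labeled graphs on labels {1,…,M}, with associated 0-1 edge-incidence matrices S^σ(G), D^σ(G) ∈ {0,1}^{|E_σ|×|S|} (row e = (s,d,σ) has S^σ_{e,s} = 1 and D^σ_{e,d} = 1) and similarly for G'. Suppose there exist a nonnegative matrix C ∈ ℝ^{|S'|×|S|} and, for each σ, a nonnegative matrix K_σ ∈ ℝ^{|E'_σ|×|E_σ|} such that S^σ(G')C ≥ K_σ S^σ(G) and D^σ(G')C ≤ K_σ D^σ(G) entrywise. Then for any maps A_1,…,A_M on ℝⁿ and any nonnegative functions (V_s)_{s∈S} satisfying D^σ(G) V(A_σ x) ≤ S^σ(G) V(x) entrywise for all σ and x, the functions U = C V (i.e. U_{s'}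 = Σ_s C_{s',s} V_s) satisfy D^σ(G') U(A_σ x) ≤ S^σ(G') U(x) entrywise for all σ and x. -/
theorem stmt16 {n M : ℕ} {S S' : Type*} [Fintype S] [Fintype S'] [DecidableEq S]
    {E E' : Fin M → Type*} [∀ σ, Fintype (E σ)] [∀ σ, Fintype (E' σ)]
    (src dst : ∀ σ : Fin M, E σ → S) (src' dst' : ∀ σ : Fin M, E' σ → S')
    (C : S' → S → ℝ) (hC : ∀ s' s, 0 ≤ C s' s)
    (K : ∀ σ : Fin M, E' σ → E σ → ℝ) (hK : ∀ σ e' e, 0 ≤ K σ e' e)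
    (hS : ∀ (σ : Fin M) (e' : E' σ) (s : S),
      (∑ e : E σ, K σ e' e * (if src σ e = s then (1 : ℝ) else 0)) ≤
        C (src' σ e') s)
    (hD : ∀ (σ : Fin M) (e' : E' σ) (s : S),
      C (dst' σ e') s ≤
        ∑ e : E σ, K σ e' e * (if dst σ e = s then (1 : ℝ) else 0))
    (A : Fin M → (Fin n → ℝ) → (Fin n → ℝ))
    (V : S → (Fin n → ℝ) → ℝ) (hVnonneg : ∀ s x, 0 ≤ V s x)
    (hLyap : ∀ (σ : Fin M) (e : E σ) (x : Fin n → ℝ),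
      V (dst σ e) (A σ x) ≤ V (src σ e) x) :
    ∀ (σ : Fin M) (e' : E' σ) (x : Fin n → ℝ),
      (∑ s : S, C (dst' σ e') s * V s (A σ x)) ≤
        ∑ s : S, C (src' σ e') s * V s x := by
  intro σ e' x
  have key : ∀ (y : Fin n → ℝ) (f : E σ → S),
      ∑ s : S, (∑ e : E σ, K σ e' e * (if f e = s then (1:ℝ) else 0)) * V s y
        = ∑ e : E σ, K σ e' e * V (f e) y := by
    intro y f
    simp_rw [Finset.sum_mul]
    rw [Finset.sum_comm]
    refine Finset.sum_congr rfl fun e _ => ?_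
    simp [Finset.mul_sum, mul_assoc, ite_mul, Finset.sum_ite_eq' Finset.univ (f e)]
  calc ∑ s : S, C (dst' σ e') s * V s (A σ x)
      ≤ ∑ s : S, (∑ e : E σ, K σ e' e * (if dst σ e = s then (1:ℝ) else 0)) * V s (A σ x) := by
        refine Finset.sum_le_sum fun s _ => mul_le_mul_of_nonneg_right (hD σ e' s) (hVnonneg s _)
    _ = ∑ e : E σ, K σ e' e * V (dst σ e) (A σ x) := key _ _
    _ ≤ ∑ e : E σ, K σ e' e * V (src σ e) x :=
        Finset.sum_le_sum fun e _ => mul_le_mul_of_nonneg_left (hLyap σ e x) (hK σ e' e)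
    _ = ∑ s : S, (∑ e : E σ, K σ e' e * (if src σ e = s then (1:ℝ) else 0)) * V s x := (key _ _).symm
    _ ≤ ∑ s : S, C (src' σ e') s * V s x :=
        Finset.sum_le_sum fun s _ => mul_le_mul_of_nonneg_right (hS σ e' s) (hVnonneg s x)
end
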